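/- arXiv:1402.0143 — 3 statements merged into one kernel-verified Lean document; each statement's English description precedes it below -/
import Mathlib

section
/- Let G be a finite group and G₁ a normal subgroup of G with |G₁| = 2. Then G₁ is contained in the center of G, and the canonical projection G → G/G₁ induces a bijection from the set of conjugacy classes of elements of order 3 in G onto the set of conjugacy classes of elements of order 3 in G/G₁. -/
/-- Let `G` be a finite group and `G₁` a normal subgroup of order 2. Then `G₁` is central,
and the canonical projection `G → G/G₁` induces a bijection from the set of conjugacy
classes of order-3 elements of `G` onto the set of conjugacy classes of order-3 elements
of `G/G₁`. -/
theorem stmt0 {G : Type*} [Group G] [Finite G] (G₁ : Subgroup G) [G₁.Normal]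
    (hcard : Nat.card G₁ = 2) :
    G₁ ≤ Subgroup.center G ∧
      Set.BijOn (ConjClasses.map (QuotientGroup.mk' G₁))
        {c : ConjClasses G | ∃ g : G, ConjClasses.mk g = c ∧ orderOf g = 3}
        {c : ConjClasses (G ⧸ G₁) | ∃ g : G ⧸ G₁, ConjClasses.mk g = c ∧ orderOf g = 3} := by
  -- the unique nontrivial element of G₁
  have huniq : ∀ x y : G₁, x ≠ 1 → y ≠ 1 → x = y := by
    obtain ⟨z, hz, hz'⟩ := (Nat.card_eq_two_iff' (1 : G₁)).mp hcard
    intro x y hx hy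
    rw [hz' x hx, hz' y hy]
  -- uniqueness at the level of G
  have huniqG : ∀ x y : G, x ∈ G₁ → y ∈ G₁ → x ≠ 1 → y ≠ 1 → x = y := by
    intro x y hx hy hx1 hy1
    have := huniq ⟨x, hx⟩ ⟨y, hy⟩ (by simpa using hx1) (by simpa using hy1)
    exact Subtype.ext_iff.mp this
  have hcen : G₁ ≤ Subgroup.center G := by
    intro z hz
    rw [Subgroup.mem_center_iff]
    intro g
    by_cases h1 : z = 1
    · simp [h1]
    · have hconj : g * z * g⁻¹ ∈ G₁ := Subgroup.Normal.conj_mem ‹G₁.Normal› z hz g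
      have hne : g * z * g⁻¹ ≠ 1 := by
        intro h
        apply h1
        have := congrArg (fun w => g⁻¹ * w * g) h
        simpa [mul_assoc] using this
      have := huniqG _ _ hconj hz hne h1
      calc g * z = (g * z * g⁻¹) * g := by group
        _ = z * g := by rw [this]
  -- order of nontrivial elements of G₁ is 2
  have hord2 : ∀ z : G, z ∈ G₁ → z ≠ 1 → z * z = 1 := by
    intro z hz h1
    have : z⁻¹ ∈ G₁ := G₁.inv_mem hz
    have hinv : z⁻¹ = z := huniqG _ _ this hz (by simpa using h1) h1
    have h := inv_mul_cancel z
    rw [hinv] at h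
    exact h
  refine ⟨hcen, ?_, ?_, ?_⟩
  · -- MapsTo
    rintro c ⟨g, rfl, hg⟩
    refine ⟨QuotientGroup.mk' G₁ g, rfl, ?_⟩
    have hdvd : orderOf (QuotientGroup.mk' G₁ g) ∣ 3 := hg ▸ orderOf_map_dvd _ g
    rcases (Nat.dvd_prime (by norm_num)).mp hdvd with h | h
    · exfalso
      have h1 : QuotientGroup.mk' G₁ g = 1 := orderOf_eq_one_iff.mp h
      have hmem : g ∈ G₁ := (QuotientGroup.ker_mk' G₁) ▸ h1
      have h2 : orderOf g ∣ 2 := hcard ▸ (Subgroup.orderOf_dvd_natCard G₁ hmem)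
      rw [hg] at h2
      norm_num at h2
    · exact h
  · -- InjOn
    rintro c₁ ⟨g, rfl, hg⟩ c₂ ⟨h, rfl, hh⟩ heq
    have : ConjClasses.mk (QuotientGroup.mk' G₁ g) = ConjClasses.mk (QuotientGroup.mk' G₁ h) := heq
    rw [ConjClasses.mk_eq_mk_iff_isConj, isConj_iff] at this
    obtain ⟨xq, hx⟩ := this
    obtain ⟨x, rfl⟩ := QuotientGroup.mk'_surjective G₁ xq
    have hx' : QuotientGroup.mk' G₁ (x * g * x⁻¹) = QuotientGroup.mk' G₁ h := by
      simpa using hx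
    have hz : h⁻¹ * (x * g * x⁻¹) ∈ G₁ := by
      rw [← QuotientGroup.ker_mk' G₁, MonoidHom.mem_ker, map_mul, map_inv, hx', inv_mul_cancel]
    set z := h⁻¹ * (x * g * x⁻¹) with hzdef
    have hxg : x * g * x⁻¹ = h * z := by rw [hzdef]; group
    by_cases h1 : z = 1
    · rw [h1, mul_one] at hxg
      exact ConjClasses.mk_eq_mk_iff_isConj.mpr (isConj_iff.mpr ⟨x, hxg⟩)
    · exfalso
      have hcomm : Commute h z := ((Subgroup.mem_center_iff.mp (hcen hz)) h)
      have hg3 : g ^ 3 = 1 := hg ▸ pow_orderOf_eq_one g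
      have h3 : (x * g * x⁻¹) ^ 3 = 1 := by
        rw [conj_pow, hg3, mul_one, mul_inv_cancel]
      rw [hxg, hcomm.mul_pow] at h3
      have hh3 : h ^ 3 = 1 := hh ▸ pow_orderOf_eq_one h
      rw [hh3, one_mul] at h3
      have : z ^ 3 = z := by
        have h2 : z * z = 1 := hord2 z hz h1
        calc z ^ 3 = (z * z) * z := by rw [pow_succ, pow_two]
          _ = z := by rw [h2, one_mul]
      rw [this] at h3
      exact h1 h3
  · -- SurjOn
    rintro c ⟨gq, rfl, hg⟩
    obtain ⟨g, rfl⟩ := QuotientGroup.mk'_surjective G₁ gq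
    have hg3 : g ^ 3 ∈ G₁ := by
      rw [← QuotientGroup.ker_mk' G₁, MonoidHom.mem_ker, map_pow]
      exact hg ▸ pow_orderOf_eq_one _
    by_cases h1 : g ^ 3 = 1
    · refine ⟨ConjClasses.mk g, ⟨g, rfl, ?_⟩, rfl⟩
      have hdvd : orderOf g ∣ 3 := orderOf_dvd_of_pow_eq_one h1
      have hd2 : orderOf (QuotientGroup.mk' G₁ g) ∣ orderOf g := orderOf_map_dvd _ g
      rcases (Nat.dvd_prime (by norm_num)).mp hdvd with h | h
      · exfalso; rw [h] at hd2; have := Nat.eq_one_of_dvd_one hd2; omega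
      · exact h
    · -- g has order 6, use g^4
      have hord : orderOf g = 6 := by
        have h6 : g ^ 6 = 1 := by
          have hz2 : (g ^ 3) * (g ^ 3) = 1 := hord2 _ hg3 h1
          calc g ^ 6 = g ^ 3 * g ^ 3 := by group
            _ = 1 := hz2
        have hdvd : orderOf g ∣ 6 := orderOf_dvd_of_pow_eq_one h6
        have hd3 : (3 : ℕ) ∣ orderOf g := by
          have := orderOf_map_dvd (QuotientGroup.mk' G₁) g
          rwa [hg] at this
        have hne : ¬ orderOf g ∣ 3 := fun h => h1 (orderOf_dvd_iff_pow_eq_one.mp h)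
        have hle : orderOf g ≤ 6 := Nat.le_of_dvd (by norm_num) hdvd
        interval_cases h : orderOf g <;> revert hne hd3 hdvd <;> decide
      refine ⟨ConjClasses.mk (g ^ 4), ⟨g ^ 4, rfl, ?_⟩, ?_⟩
      · rw [orderOf_pow, hord]; rfl
      · show ConjClasses.mk (QuotientGroup.mk' G₁ (g ^ 4)) = ConjClasses.mk (QuotientGroup.mk' G₁ g)
        congr 1
        rw [map_pow]
        have : (QuotientGroup.mk' G₁ g) ^ 3 = 1 := hg ▸ pow_orderOf_eq_one _
        calc (QuotientGroup.mk' G₁ g) ^ 4 = (QuotientGroup.mk' G₁ g) ^ 3 * QuotientGroup.mk' G₁ g := by group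
          _ = QuotientGroup.mk' G₁ g := by rw [this, one_mul]
end

section
/- Let L be a Niemeier lattice with root lattice Q, and let τ ∈ Aut L have order 3. Suppose R₁, R₂, R₃, R₄ are pairwise orthogonal sublattices of Q, each generated by its vectors of norm 2, such that Q = R₁ ⊕ R₂ ⊕ R₃ ⊕ R₄ (internal direct sum) and τ(R₁) = R₂, τ(R₂) = R₃, τ(R₃) = R₁, τ(R₄) = R₄. Let W ≤ Aut L be the subgroup generated by the reflections r_α for α ∈ R₁ ∪ R₂ ∪ R₃ with ⟨α,α⟩ = 2. If w ∈ W and wτ has order 3, then wτ is conjugate to τ in Aut L. -/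
/-!
Let `Wᵢ` be the group generated by the reflections in the roots of `Rᵢ`. Orthogonality makes
`W₀, W₁, W₂` commute elementwise, so `w = a b c` with `a ∈ W₀, b ∈ W₁, c ∈ W₂`, and conjugation
by `τ` carries `W₀ → W₁ → W₂ → W₀`. Conjugating `wτ` by `g = b c (τ b τ⁻¹)` gives `Aτ` with
`A = a (τ c τ⁻¹) (τ² b τ⁻²) ∈ W₀`. Since `(Aτ)³ = τ³ = 1`, `A⁻¹ = (τ A τ⁻¹)(τ² A τ⁻²) ∈ W₁ W₂`.
A product of reflections in roots of a subgroup `M` moves every vector by an element of `M`,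
so `A x - x ∈ R₀ ∩ (R₁ + R₂) = 0` and `A = 1`.
-/

/-- The multiplicative group structure on `AddAut A` (composition) that older Mathlib provided. -/
instance addAutMulGroupOld {A : Type*} [Add A] : Group (AddAut A) where
  mul g h := AddEquiv.trans h g
  one := AddEquiv.refl _
  inv := AddEquiv.symm
  mul_assoc _ _ _ := rfl
  one_mul _ := rfl
  mul_one _ := rfl
  inv_mul_cancel := AddEquiv.self_trans_symm

section Infra
variable {L : Type*} [AddCommGroup L]

/-- The subgroup of fixed points of an automorphism of an abelian group. -/
def fixedPts (f : AddAut L) : AddSubgroup L where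
  carrier := {x | f x = x}
  add_mem' := by
    intro a b ha hb
    simp only [Set.mem_setOf_eq, map_add] at *
    rw [ha, hb]
  zero_mem' := by simp
  neg_mem' := by
    intro a ha
    simp only [Set.mem_setOf_eq, map_neg] at *
    rw [ha]

/-- The isometry group of a `ℤ`-valued form: the group of all automorphisms of the
additive group preserving the form.  For a lattice `(L, B)` this is `Aut L`. -/
def IsometryGrp (B : L → L → ℤ) : Subgroup (AddAut L) where
  carrier := {f | ∀ x y, B (f x) (f y) = B x y}
  one_mem' := by intro x y; rfl
  mul_mem' := by
    intro a b ha hb x y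
    have h : ∀ z, (a * b) z = a (b z) := fun z => rfl
    simp only [Set.mem_setOf_eq] at *
    rw [h, h, ha, hb]
  inv_mem' := by
    intro a ha x y
    simp only [Set.mem_setOf_eq] at *
    have h := ha (a⁻¹ x) (a⁻¹ y)
    have h1 : a (a⁻¹ x) = x := a.apply_symm_apply x
    have h2 : a (a⁻¹ y) = y := a.apply_symm_apply y
    rw [h1, h2] at h
    exact h.symm

/-- The Weyl group of a lattice `(L, B)`: the subgroup generated by the reflections
`r_α : x ↦ x − B(x,α)•α` in the norm-2 vectors `α`. -/
def WeylGrp (B : L → L → ℤ) : Subgroup (AddAut L) :=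
  Subgroup.closure {w | ∃ α : L, B α α = 2 ∧ ∀ x, w x = x - B x α • α}

/-- The root lattice of `(L, B)`: the subgroup generated by the norm-2 vectors. -/
def rootLat (B : L → L → ℤ) : AddSubgroup L :=
  AddSubgroup.closure {α | B α α = 2}

/-- The rank of the fixed-point sublattice of an automorphism. -/
noncomputable def fixedRank (f : AddAut L) : ℕ :=
  Module.finrank ℤ ↥(fixedPts f)

end Infra

/-- An isomorphism of lattices: an isomorphism of the underlying abelian groups
(equivalently, a `ℤ`-linear isomorphism) preserving the forms. -/
def FormIso {M N : Type*} [AddCommGroup M] [AddCommGroup N]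
    (BM : M → M → ℤ) (BN : N → N → ℤ) : Prop :=
  ∃ e : M ≃+ N, ∀ x y, BN (e x) (e y) = BM x y

/-- The standard dot product on `ι → ℤ`. -/
def dotF {ι : Type*} [Fintype ι] (x y : ι → ℤ) : ℤ := ∑ i, x i * y i

open Subgroup

namespace Subgroup

variable {G : Type*} [Group G]

theorem exists_mul_eq_of_mem_sup_of_le_centralizer {H K : Subgroup G} (hHK : H ≤ centralizer K)
    {x : G} (hx : x ∈ H ⊔ K) : ∃ y ∈ H, ∃ z ∈ K, y * z = x := by
  rw [← SetLike.mem_coe, coe_mul_of_left_le_normalizer_right H K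
    (hHK.trans (centralizer_le_normalizer (K : Set G)))] at hx
  exact hx

theorem exists_mul_mul_eq_of_mem_sup_of_le_centralizer {H K M : Subgroup G}
    (hHK : H ≤ centralizer K) (hHM : H ≤ centralizer M) (hKM : K ≤ centralizer M) {x : G}
    (hx : x ∈ H ⊔ K ⊔ M) : ∃ a ∈ H, ∃ b ∈ K, ∃ c ∈ M, a * b * c = x := by
  obtain ⟨y, hy, c, hc, rfl⟩ :=
    exists_mul_eq_of_mem_sup_of_le_centralizer (sup_le hHM hKM) hx
  obtain ⟨a, ha, b, hb, rfl⟩ := exists_mul_eq_of_mem_sup_of_le_centralizer hHK hy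
  exact ⟨a, ha, b, hb, c, hc, rfl⟩

end Subgroup

section TwistedConjugation

variable {G : Type*} [Group G]

theorem conj_mul_mul_mul_eq_of_commute {a b c τ : G} (hab : Commute a b) (hac : Commute a c)
    (had : Commute a (τ * b * τ⁻¹)) :
    (b * c * (τ * b * τ⁻¹))⁻¹ * (a * b * c * τ) * (b * c * (τ * b * τ⁻¹)) =
      a * (τ * c * τ⁻¹) * (τ * (τ * b * τ⁻¹) * τ⁻¹) * τ := by
  have hag : Commute a (b * c * (τ * b * τ⁻¹)) := (hab.mul_right hac).mul_right had
  calc _ = (b * c * (τ * b * τ⁻¹))⁻¹ * a * (b * c * τ * (b * c * (τ * b * τ⁻¹))) := by group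
    _ = a * (b * c * (τ * b * τ⁻¹))⁻¹ * (b * c * τ * (b * c * (τ * b * τ⁻¹))) := by
      rw [hag.inv_right.eq]
    _ = _ := by group

theorem inv_eq_mul_conj_of_pow_three {A τ : G} (hτ : τ ^ 3 = 1) (hAτ : (A * τ) ^ 3 = 1) :
    A⁻¹ = τ * A * τ⁻¹ * (τ * (τ * A * τ⁻¹) * τ⁻¹) := by
  refine inv_eq_of_mul_eq_one_right ?_
  calc A * (τ * A * τ⁻¹ * (τ * (τ * A * τ⁻¹) * τ⁻¹))
      = (A * τ) ^ 3 * (τ ^ 3)⁻¹ := by simp only [pow_succ, pow_zero, one_mul]; group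
    _ = 1 := by rw [hτ, hAτ, inv_one, mul_one]

end TwistedConjugation

section Reflections

theorem addAut_mul_apply {A : Type*} [Add A] (f g : AddAut A) (x : A) : (f * g) x = f (g x) :=
  rfl

theorem addAut_apply_inv_apply {A : Type*} [Add A] (f : AddAut A) (x : A) : f (f⁻¹ x) = x :=
  f.apply_symm_apply x

variable {L : Type*} [AddCommGroup L]

def displacedIn (M : AddSubgroup L) : Subgroup (AddAut L) where
  carrier := {u | ∀ x, u x - x ∈ M}
  one_mem' x := by simp [show (1 : AddAut L) x = x from rfl]
  mul_mem' {u v} hu hv x := by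
    simpa [addAut_mul_apply] using M.add_mem (hu (v x)) (hv x)
  inv_mem' {u} hu x := by
    simpa [addAut_apply_inv_apply] using M.neg_mem (hu (u⁻¹ x))

theorem eq_one_of_mem_displacedIn {M N : AddSubgroup L} (hMN : Disjoint M N) {u : AddAut L}
    (hM : u ∈ displacedIn M) (hN : u ∈ displacedIn N) : u = 1 :=
  AddEquiv.ext fun x => sub_eq_zero.mp (AddSubgroup.disjoint_def.mp hMN (hM x) (hN x))

variable (B : L → L → ℤ)

def reflections (P : Set L) : Set (AddAut L) :=
  {u | ∃ α ∈ P, ∀ x, u x = x - B x α • α}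

def reflectionGroup (P : Set L) : Subgroup (AddAut L) :=
  closure (reflections B P)

def rootsIn (R : AddSubgroup L) : Set L :=
  {α | α ∈ R ∧ B α α = 2}

variable {B}

theorem reflectionGroup_union (P P' : Set L) :
    reflectionGroup B (P ∪ P') = reflectionGroup B P ⊔ reflectionGroup B P' := by
  rw [reflectionGroup, reflectionGroup, reflectionGroup, ← Subgroup.closure_union]
  congr 1
  ext u
  simp only [reflections, Set.mem_union, Set.mem_ofPred_eq]
  constructor
  · rintro ⟨α, hα | hα, hu⟩
    exacts [Or.inl ⟨α, hα, hu⟩, Or.inr ⟨α, hα, hu⟩]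
  · rintro (⟨α, hα, hu⟩ | ⟨α, hα, hu⟩)
    exacts [⟨α, Or.inl hα, hu⟩, ⟨α, Or.inr hα, hu⟩]

theorem reflectionGroup_le_displacedIn {P : Set L} {M : AddSubgroup L} (hPM : P ⊆ M) :
    reflectionGroup B P ≤ displacedIn M := by
  rw [reflectionGroup, closure_le]
  rintro u ⟨α, hα, hu⟩ x
  simpa [hu x] using M.neg_mem (M.zsmul_mem (hPM hα) (B x α))

theorem form_sub_left (hadd : ∀ x y z : L, B (x + y) z = B x z + B y z) (x y z : L) :
    B (x - y) z = B x z - B y z :=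
  map_sub (AddMonoidHom.mk' (B · z) (hadd · · z)) x y

theorem form_zsmul_left (hadd : ∀ x y z : L, B (x + y) z = B x z + B y z) (n : ℤ) (x y : L) :
    B (n • x) y = n * B x y :=
  map_zsmul (AddMonoidHom.mk' (B · y) (hadd · · y)) n x

theorem reflection_commute (hadd : ∀ x y z : L, B (x + y) z = B x z + B y z) {α β : L}
    (hαβ : B α β = 0) (hβα : B β α = 0) {u v : AddAut L} (hu : ∀ x, u x = x - B x α • α)
    (hv : ∀ x, v x = x - B x β • β) : Commute u v :=
  AddEquiv.ext fun x => by
    rw [addAut_mul_apply, addAut_mul_apply, hv, hu, hu, hv]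
    simp only [form_sub_left hadd, form_zsmul_left hadd, hαβ, hβα, mul_zero, sub_zero]
    abel

theorem reflectionGroup_le_centralizer (hadd : ∀ x y z : L, B (x + y) z = B x z + B y z)
    (hsymm : ∀ x y : L, B x y = B y x) {P P' : Set L} (hPP' : ∀ α ∈ P, ∀ β ∈ P', B α β = 0) :
    reflectionGroup B P ≤ centralizer (reflectionGroup B P') := by
  rw [reflectionGroup, closure_le, reflectionGroup, centralizer_closure]
  rintro u ⟨α, hα, hu⟩
  rw [SetLike.mem_coe, mem_centralizer_iff]
  rintro v ⟨β, hβ, hv⟩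
  exact reflection_commute hadd (hsymm β α ▸ hPP' α hα β hβ) (hPP' α hα β hβ) hv hu

theorem reflectionGroup_le_isometryGrp (hadd : ∀ x y z : L, B (x + y) z = B x z + B y z)
    (hsymm : ∀ x y : L, B x y = B y x) {P : Set L} (hP : ∀ α ∈ P, B α α = 2) :
    reflectionGroup B P ≤ IsometryGrp B := by
  have form_sub_right (x y z : L) : B x (y - z) = B x y - B x z := by
    rw [hsymm, form_sub_left hadd, hsymm y, hsymm z]
  have form_zsmul_right (n : ℤ) (x y : L) : B x (n • y) = n * B x y := by
    rw [hsymm, form_zsmul_left hadd, hsymm y]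
  rw [reflectionGroup, closure_le]
  rintro u ⟨α, hα, hu⟩ x y
  rw [hu, hu]
  simp only [form_sub_left hadd, form_sub_right, form_zsmul_left hadd, form_zsmul_right,
    hP α hα, hsymm α y]
  ring

theorem conj_mem_reflectionGroup {τ : AddAut L} (hτ : τ ∈ IsometryGrp B) {P P' : Set L}
    (hPP' : ∀ α ∈ P, τ α ∈ P') {u : AddAut L} (hu : u ∈ reflectionGroup B P) :
    τ * u * τ⁻¹ ∈ reflectionGroup B P' := by
  suffices reflectionGroup B P ≤ (reflectionGroup B P').comap (MulAut.conj τ).toMonoidHom from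
    this hu
  rw [reflectionGroup, closure_le]
  rintro v ⟨α, hα, hv⟩
  refine subset_closure ⟨τ α, hPP' α hα, fun x => ?_⟩
  have hx : B (τ⁻¹ x) α = B x (τ α) := by
    simpa [addAut_apply_inv_apply] using (hτ (τ⁻¹ x) α).symm
  change τ (v (τ⁻¹ x)) = _
  rw [hv, map_sub, map_zsmul, addAut_apply_inv_apply, hx]

theorem map_mem_rootsIn {τ : AddAut L} (hτ : τ ∈ IsometryGrp B) {R R' : AddSubgroup L}
    (hRR' : R.map τ.toAddMonoidHom = R') {α : L} (hα : α ∈ rootsIn B R) :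
    τ α ∈ rootsIn B R' :=
  ⟨hRR' ▸ AddSubgroup.mem_map_of_mem _ hα.1, (hτ α α).trans hα.2⟩

theorem conj_mem_reflectionGroup_rootsIn {τ : AddAut L} (hτ : τ ∈ IsometryGrp B)
    {R R' : AddSubgroup L} (hRR' : R.map τ.toAddMonoidHom = R') {u : AddAut L}
    (hu : u ∈ reflectionGroup B (rootsIn B R)) :
    τ * u * τ⁻¹ ∈ reflectionGroup B (rootsIn B R') :=
  conj_mem_reflectionGroup hτ (fun _ => map_mem_rootsIn hτ hRR') hu

theorem reflectionGroup_rootsIn_le_centralizer (hadd : ∀ x y z : L, B (x + y) z = B x z + B y z)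
    (hsymm : ∀ x y : L, B x y = B y x) {R R' : AddSubgroup L}
    (hRR' : ∀ x ∈ R, ∀ y ∈ R', B x y = 0) :
    reflectionGroup B (rootsIn B R) ≤ centralizer (reflectionGroup B (rootsIn B R')) :=
  reflectionGroup_le_centralizer hadd hsymm fun α hα β hβ => hRR' α hα.1 β hβ.1

theorem reflectionGroup_rootsIn_le_displacedIn {R M : AddSubgroup L} (hRM : R ≤ M) :
    reflectionGroup B (rootsIn B R) ≤ displacedIn M :=
  reflectionGroup_le_displacedIn fun _ hα => hRM hα.1

theorem closure_reflections_eq_sup (R₀ R₁ R₂ : AddSubgroup L) :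
    closure {u : AddAut L | ∃ α : L,
      (α ∈ R₀ ∨ α ∈ R₁ ∨ α ∈ R₂) ∧ B α α = 2 ∧ ∀ x, u x = x - B x α • α} =
      reflectionGroup B (rootsIn B R₀) ⊔ reflectionGroup B (rootsIn B R₁) ⊔
        reflectionGroup B (rootsIn B R₂) := by
  rw [← reflectionGroup_union, ← reflectionGroup_union, reflectionGroup]
  congr 1
  ext u
  simp only [reflections, rootsIn, Set.mem_union, Set.mem_ofPred_eq]
  constructor
  · rintro ⟨α, hα | hα | hα, h2, hu⟩
    exacts [⟨α, .inl (.inl ⟨hα, h2⟩), hu⟩, ⟨α, .inl (.inr ⟨hα, h2⟩), hu⟩,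
      ⟨α, .inr ⟨hα, h2⟩, hu⟩]
  · rintro ⟨α, (⟨hα, h2⟩ | ⟨hα, h2⟩) | ⟨hα, h2⟩, hu⟩
    exacts [⟨α, .inl hα, h2, hu⟩, ⟨α, .inr (.inl hα), h2, hu⟩, ⟨α, .inr (.inr hα), h2, hu⟩]

theorem eq_one_of_mul_pow_three_eq_one {τ : AddAut L} (hτ : τ ∈ IsometryGrp B) (hτ3 : τ ^ 3 = 1)
    {R₀ R₁ R₂ : AddSubgroup L} (h₀₁ : R₀.map τ.toAddMonoidHom = R₁)
    (h₁₂ : R₁.map τ.toAddMonoidHom = R₂) (hdisj : Disjoint R₀ (R₁ ⊔ R₂)) {A : AddAut L}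
    (hA : A ∈ reflectionGroup B (rootsIn B R₀)) (hAτ : (A * τ) ^ 3 = 1) : A = 1 := by
  have hτA := conj_mem_reflectionGroup_rootsIn hτ h₀₁ hA
  have hAinv : A⁻¹ ∈ reflectionGroup B (rootsIn B R₁) ⊔ reflectionGroup B (rootsIn B R₂) := by
    rw [inv_eq_mul_conj_of_pow_three hτ3 hAτ]
    exact mul_mem_sup hτA (conj_mem_reflectionGroup_rootsIn hτ h₁₂ hτA)
  have hle : reflectionGroup B (rootsIn B R₁) ⊔ reflectionGroup B (rootsIn B R₂) ≤
      displacedIn (R₁ ⊔ R₂) :=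
    sup_le (reflectionGroup_rootsIn_le_displacedIn le_sup_left)
      (reflectionGroup_rootsIn_le_displacedIn le_sup_right)
  exact eq_one_of_mem_displacedIn hdisj (reflectionGroup_rootsIn_le_displacedIn le_rfl hA)
    (inv_mem_iff.mp (hle hAinv))

end Reflections

theorem stmt4_general
    {L : Type*} [AddCommGroup L]
    (B : L → L → ℤ)
    (hadd : ∀ x y z : L, B (x + y) z = B x z + B y z)
    (hsymm : ∀ x y : L, B x y = B y x)
    (τ : AddAut L) (hτmem : τ ∈ IsometryGrp B) (hord : orderOf τ = 3)
    (R : Fin 4 → AddSubgroup L)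
    (horth : ∀ i j, i ≠ j → ∀ x ∈ R i, ∀ y ∈ R j, B x y = 0)
    (hind : iSupIndep R)
    (h1 : (R 0).map τ.toAddMonoidHom = R 1)
    (h2 : (R 1).map τ.toAddMonoidHom = R 2)
    (h3 : (R 2).map τ.toAddMonoidHom = R 0)
    (w : AddAut L)
    (hw : w ∈ Subgroup.closure {u : AddAut L | ∃ α : L,
      (α ∈ R 0 ∨ α ∈ R 1 ∨ α ∈ R 2) ∧ B α α = 2 ∧ ∀ x, u x = x - B x α • α})
    (hword : orderOf (w * τ) = 3) :
    ∃ g ∈ IsometryGrp B, g⁻¹ * (w * τ) * g = τ := by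
  set W : Fin 4 → Subgroup (AddAut L) := fun i => reflectionGroup B (rootsIn B (R i))
  have hcomm : ∀ i j, i ≠ j → W i ≤ centralizer (W j) := fun i j hij =>
    reflectionGroup_rootsIn_le_centralizer hadd hsymm (horth i j hij)
  have hcommute : ∀ i j, i ≠ j → ∀ u ∈ W i, ∀ v ∈ W j, Commute u v := fun i j hij u hu v hv =>
    ((mem_centralizer_iff.mp (hcomm i j hij hu)) v hv).symm
  have hisom : ∀ i, W i ≤ IsometryGrp B := fun i =>
    reflectionGroup_le_isometryGrp hadd hsymm fun _ hα => hα.2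
  rw [closure_reflections_eq_sup] at hw
  obtain ⟨a, ha, b, hb, c, hc, rfl⟩ := exists_mul_mul_eq_of_mem_sup_of_le_centralizer
    (hcomm 0 1 (by decide)) (hcomm 0 2 (by decide)) (hcomm 1 2 (by decide)) hw
  have hτb : τ * b * τ⁻¹ ∈ W 2 := conj_mem_reflectionGroup_rootsIn hτmem h2 hb
  have hconj := conj_mul_mul_mul_eq_of_commute (hcommute 0 1 (by decide) a ha b hb)
    (hcommute 0 2 (by decide) a ha c hc) (hcommute 0 2 (by decide) a ha _ hτb)
  set g := b * c * (τ * b * τ⁻¹)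
  have hA : a * (τ * c * τ⁻¹) * (τ * (τ * b * τ⁻¹) * τ⁻¹) = 1 := by
    refine eq_one_of_mul_pow_three_eq_one hτmem (hord ▸ pow_orderOf_eq_one τ) h1 h2 ?_
      (mul_mem (mul_mem ha (conj_mem_reflectionGroup_rootsIn hτmem h3 hc))
        (conj_mem_reflectionGroup_rootsIn hτmem h3 hτb)) ?_
    · simpa only [iSup_pair] using hind.disjoint_biSup (y := {1, 2}) (by decide)
    · simpa [hconj, hword ▸ pow_orderOf_eq_one (a * b * c * τ)] using
        conj_pow (a := g⁻¹) (b := a * b * c * τ) (i := 3)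
  exact ⟨g, mul_mem (mul_mem (hisom 1 hb) (hisom 2 hc)) (hisom 2 hτb), by rw [hconj, hA, one_mul]⟩

/-- Lemma 3.6: let `L` be a Niemeier lattice with root lattice `Q`, `τ ∈ Aut L` of
order 3, and `R₁, R₂, R₃, R₄` pairwise orthogonal root sublattices with
`Q = R₁ ⊕ R₂ ⊕ R₃ ⊕ R₄`, cyclically permuted (resp. preserved) by `τ` as indicated.
If `w ∈ W(R₁ ⊕ R₂ ⊕ R₃)` and `wτ` has order 3, then `wτ` is conjugate to `τ` in
`Aut L`. -/
theorem stmt4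
    {L : Type*} [AddCommGroup L] [Module.Free ℤ L] [Module.Finite ℤ L]
    (B : L → L → ℤ)
    (hrank : Module.finrank ℤ L = 24)
    (hadd : ∀ x y z : L, B (x + y) z = B x z + B y z)
    (hsymm : ∀ x y : L, B x y = B y x)
    (heven : ∀ x : L, (2 : ℤ) ∣ B x x)
    (hpos : ∀ x : L, x ≠ 0 → 0 < B x x)
    (hunimod : ∀ f : L →+ ℤ, ∃! x : L, ∀ y : L, B x y = f y)
    (τ : AddAut L) (hτmem : τ ∈ IsometryGrp B) (hord : orderOf τ = 3)
    (R : Fin 4 → AddSubgroup L)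
    (hle : ∀ i, R i ≤ rootLat B)
    (hgen : ∀ i, R i = AddSubgroup.closure {α | α ∈ R i ∧ B α α = 2})
    (horth : ∀ i j, i ≠ j → ∀ x ∈ R i, ∀ y ∈ R j, B x y = 0)
    (hsup : R 0 ⊔ R 1 ⊔ R 2 ⊔ R 3 = rootLat B)
    (hind : iSupIndep R)
    (h1 : (R 0).map τ.toAddMonoidHom = R 1)
    (h2 : (R 1).map τ.toAddMonoidHom = R 2)
    (h3 : (R 2).map τ.toAddMonoidHom = R 0)
    (h4 : (R 3).map τ.toAddMonoidHom = R 3)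
    (w : AddAut L)
    (hw : w ∈ Subgroup.closure {u : AddAut L | ∃ α : L,
      (α ∈ R 0 ∨ α ∈ R 1 ∨ α ∈ R 2) ∧ B α α = 2 ∧ ∀ x, u x = x - B x α • α})
    (hword : orderOf (w * τ) = 3) :
    ∃ g ∈ IsometryGrp B, g⁻¹ * (w * τ) * g = τ :=
  stmt4_general B hadd hsymm τ hτmem hord R horth hind h1 h2 h3 w hw hword
end

section
/- Let N ⊆ ℚ²⁴ = (ℚ⁴)⁶ be the ℤ-submodule generated by D₄⁶ = D₄ × ⋯ × D₄ (6 factors) together with the seven vectors ([1],[1],[1],[1],[1],[1]), ([2],[2],[2],[2],[2],[2]), ([0],[0],[2],[3],[3],[2]), ([0],[2],[3],[3],[2],[0]), ([0],[3],[3],[2],[0],[2]), ([0],[3],[2],[0],[2],[3]), ([0],[2],[0],[2],[3],[3]), where [0]=(0,0,0,0), [1]=(½,½,½,½), [2]=(0,0,0,1), [3]=(½,½,½,−½), and equip ℚ²⁴ with the standard inner product. Let φ⁽⁶⁾ : ℚ²⁴ → ℚ²⁴ apply to each of the six ℚ⁴-blocks the linear map φ with φ(e₁)=½(−1,1,1,1),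 φ(e₂)=½(−1,−1,1,−1), φ(e₃)=½(−1,−1,−1,1), φ(e₄)=½(−1,1,−1,−1). Then: N is an even unimodular positive-definite lattice of rank 24; φ⁽⁶⁾(N) = N; φ⁽⁶⁾ is an isometry of order 3; and the fixed-point set {x ∈ N : φ⁽⁶⁾(x) = x} equals {0}. -/
/-- The standard inner product on `ℚ²⁴ = (ℚ⁴)⁶`. -/
def dotQ (x y : Fin 6 → Fin 4 → ℚ) : ℚ := ∑ i, ∑ j, x i j * y i j

/-- The lattice `D₄ = {x ∈ ℤ⁴ : x₁+x₂+x₃+x₄ ∈ 2ℤ}`, viewed as a `ℤ`-submodule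
(additive subgroup) of `ℚ⁴`. -/
def D4Q : AddSubgroup (Fin 4 → ℚ) where
  carrier := {x | (∀ j, ∃ k : ℤ, x j = k) ∧ ∃ m : ℤ, ∑ j, x j = 2 * m}
  add_mem' := by
    rintro a b ⟨haint, ma, hma⟩ ⟨hbint, mb, hmb⟩
    refine ⟨fun j => ?_, ⟨ma + mb, ?_⟩⟩
    · obtain ⟨k, hk⟩ := haint j
      obtain ⟨l, hl⟩ := hbint j
      exact ⟨k + l, by simp [hk, hl]⟩
    · simp only [Pi.add_apply, Finset.sum_add_distrib, hma, hmb]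
      push_cast; ring
  zero_mem' := ⟨fun j => ⟨0, by simp⟩, ⟨0, by simp⟩⟩
  neg_mem' := by
    rintro a ⟨haint, ma, hma⟩
    refine ⟨fun j => ?_, ⟨-ma, ?_⟩⟩
    · obtain ⟨k, hk⟩ := haint j
      exact ⟨-k, by simp [hk]⟩
    · simp only [Pi.neg_apply, Finset.sum_neg_distrib, hma]
      push_cast; ring

/-- The glue vectors `[0] = (0,0,0,0)`, `[1] = (½,½,½,½)`, `[2] = (0,0,0,1)`,
`[3] = (½,½,½,−½)` in `ℚ⁴`. -/
def glue : Fin 4 → Fin 4 → ℚ :=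
  ![![0, 0, 0, 0], ![1/2, 1/2, 1/2, 1/2], ![0, 0, 0, 1], ![1/2, 1/2, 1/2, -1/2]]

/-- The seven glue vectors `[111111]`, `[222222]`, `[002332]`, `[023320]`, `[033202]`,
`[032023]`, `[020233]` of the Niemeier lattice `Ni(D₄⁶)` in `ℚ²⁴`. -/
def glueVecs : Fin 7 → Fin 6 → Fin 4 → ℚ :=
  ![![glue 1, glue 1, glue 1, glue 1, glue 1, glue 1],
    ![glue 2, glue 2, glue 2, glue 2, glue 2, glue 2],
    ![glue 0, glue 0, glue 2, glue 3, glue 3, glue 2],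
    ![glue 0, glue 2, glue 3, glue 3, glue 2, glue 0],
    ![glue 0, glue 3, glue 3, glue 2, glue 0, glue 2],
    ![glue 0, glue 3, glue 2, glue 0, glue 2, glue 3],
    ![glue 0, glue 2, glue 0, glue 2, glue 3, glue 3]]

/-- The `ℤ`-submodule `N ⊆ ℚ²⁴` generated by `D₄⁶` together with the seven glue
vectors: the Niemeier lattice `Ni(D₄⁶)`. -/
def NLat : AddSubgroup (Fin 6 → Fin 4 → ℚ) :=
  AddSubgroup.closure ({x | ∀ i, x i ∈ D4Q} ∪ Set.range glueVecs)

/-- Twice the matrix of the map `φ` on `ℚ⁴`: `φ(e₁) = ½(−1,1,1,1)`,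
`φ(e₂) = ½(−1,−1,1,−1)`, `φ(e₃) = ½(−1,−1,−1,1)`, `φ(e₄) = ½(−1,1,−1,−1)`. -/
def phiMQ : Matrix (Fin 4) (Fin 4) ℚ :=
  !![-1,-1,-1,-1; 1,-1,-1,1; 1,1,-1,-1; 1,-1,1,-1]

/-- The map `φ⁽⁶⁾ : ℚ²⁴ → ℚ²⁴` applying `φ` to each of the six `ℚ⁴`-blocks. -/
def phi6 (x : Fin 6 → Fin 4 → ℚ) : Fin 6 → Fin 4 → ℚ :=
  fun i => ((1/2 : ℚ) • phiMQ).mulVec (x i)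

/-!
`N` is integral and even because its generators are: `D₄` is an even lattice, every block of a
glue vector lies in the dual `D₄*`, and the seven glue vectors have even norms and integral
mutual products. Twenty-four explicit vectors of `N` have a Gram matrix `G` with an integral
inverse; the lattice `L` they span is therefore self-dual, and `L ⊆ N ⊆ N* ⊆ L* = L` shows that
`N = L` is unimodular of rank 24. On each block, `φ` is orthogonal with `φ² + φ + 1 = 0`, so `φ⁽⁶⁾`
is an isometry of order 3 without nonzero fixed vectors; it preserves `D₄` and sends every glue
vector into `N`, hence preserves `N`.
-/

open Module Matrix

namespace LinearMap.BilinForm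

variable {M : Type*} [AddCommGroup M] [Module ℚ M] (B : LinearMap.BilinForm ℚ M)

theorem exists_int_of_mem_closure {S : Set M} (hS : ∀ s ∈ S, ∀ t ∈ S, ∃ n : ℤ, B s t = n)
    {x y : M} (hx : x ∈ AddSubgroup.closure S) (hy : y ∈ AddSubgroup.closure S) :
    ∃ n : ℤ, B x y = n := by
  induction hx, hy using AddSubgroup.closure_induction₂ with
  | mem s t hs ht => exact hS s hs t ht
  | zero_left => exact ⟨0, by simp⟩
  | zero_right => exact ⟨0, by simp⟩
  | add_left _ _ _ _ _ _ h₁ h₂ =>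
    obtain ⟨⟨m, hm⟩, ⟨n, hn⟩⟩ := And.intro h₁ h₂
    exact ⟨m + n, by simp [hm, hn]⟩
  | add_right _ _ _ _ _ _ h₁ h₂ =>
    obtain ⟨⟨m, hm⟩, ⟨n, hn⟩⟩ := And.intro h₁ h₂
    exact ⟨m + n, by simp [hm, hn]⟩
  | neg_left _ _ _ _ h => obtain ⟨n, hn⟩ := h; exact ⟨-n, by simp [hn]⟩
  | neg_right _ _ _ _ h => obtain ⟨n, hn⟩ := h; exact ⟨-n, by simp [hn]⟩

theorem exists_even_of_mem_closure (hB : B.IsSymm) {S : Set M}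
    (hS : ∀ s ∈ S, ∀ t ∈ S, ∃ n : ℤ, B s t = n) (hS₂ : ∀ s ∈ S, ∃ m : ℤ, B s s = 2 * m)
    {x : M} (hx : x ∈ AddSubgroup.closure S) : ∃ m : ℤ, B x x = 2 * m := by
  induction hx using AddSubgroup.closure_induction with
  | mem s hs => exact hS₂ s hs
  | zero => exact ⟨0, by simp⟩
  | add x y hx hy h₁ h₂ =>
    obtain ⟨⟨m, hm⟩, ⟨n, hn⟩, ⟨k, hk⟩⟩ :=
      And.intro h₁ (And.intro h₂ (exists_int_of_mem_closure B hS hx hy))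
    refine ⟨m + n + k, ?_⟩
    rw [add_left, add_right, add_right, hB.eq y x, hm, hn, hk]
    push_cast
    ring
  | neg x _ h => simpa using h

theorem linearIndependent_of_mul_gram_eq_one {ι : Type*} [Fintype ι] [DecidableEq ι]
    (v : ι → M) {H : Matrix ι ι ℚ} (hH : H * Matrix.of (fun k l => B (v k) (v l)) = 1) :
    LinearIndependent ℚ v := by
  refine Fintype.linearIndependent_iff.2 fun g hg => ?_
  have hgram : g ᵥ* Matrix.of (fun k l => B (v k) (v l)) = 0 := by
    funext l
    simpa [vecMul, dotProduct, map_sum] using congrArg (B · (v l)) hg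
  have hg0 : g = 0 := by
    rw [← vecMul_one g, ← mul_eq_one_comm.mp hH, ← vecMul_vecMul, hgram, zero_vecMul]
  exact congrFun hg0

section Basis

variable {ι : Type*} [Fintype ι] (b : Basis ι ℚ M)

theorem apply_basis_eq_vecMul [DecidableEq ι] (x : M) (l : ι) :
    B x (b l) = (b.repr x ᵥ* toMatrix b B) l := by
  rw [apply_eq_dotProduct_toMatrix_mulVec b, Basis.repr_self, Finsupp.single_eq_pi_single,
    mulVec_single_one, vecMul]
  rfl

theorem mem_closure_range_of_repr_int {x : M} (hx : ∀ k, ∃ n : ℤ, b.repr x k = n) :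
    x ∈ AddSubgroup.closure (Set.range b) := by
  choose n hn using hx
  rw [← b.sum_repr x]
  refine sum_mem fun k _ => ?_
  rw [hn k, Int.cast_smul_eq_zsmul]
  exact zsmul_mem (AddSubgroup.subset_closure (Set.mem_range_self k)) _

variable {B b} [DecidableEq ι] {H : Matrix ι ι ℤ}

theorem repr_eq_of_apply_basis (hH : H.map (Int.cast : ℤ → ℚ) * toMatrix b B = 1) {x : M}
    {w : ι → ℚ} (hx : ∀ l, B x (b l) = w l) : b.repr x = w ᵥ* H.map (Int.cast : ℤ → ℚ) := by
  have hvec : b.repr x ᵥ* toMatrix b B = w :=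
    funext fun l => (apply_basis_eq_vecMul B b x l).symm.trans (hx l)
  rw [← hvec, vecMul_vecMul, mul_eq_one_comm.mp hH, vecMul_one]

theorem mem_closure_range_of_forall_int (hH : H.map (Int.cast : ℤ → ℚ) * toMatrix b B = 1)
    {x : M} (hx : ∀ l, ∃ n : ℤ, B x (b l) = n) : x ∈ AddSubgroup.closure (Set.range b) := by
  choose w hw using hx
  refine mem_closure_range_of_repr_int b fun k => ⟨(w ᵥ* H) k, ?_⟩
  rw [repr_eq_of_apply_basis hH hw]
  exact (RingHom.map_vecMul (Int.castRingHom ℚ) H w k).symm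

theorem eq_closure_range_of_integral (hH : H.map (Int.cast : ℤ → ℚ) * toMatrix b B = 1)
    {N : AddSubgroup M} (hbN : ∀ k, b k ∈ N) (hN : ∀ x ∈ N, ∀ y ∈ N, ∃ n : ℤ, B x y = n) :
    N = AddSubgroup.closure (Set.range b) :=
  le_antisymm (fun x hx => mem_closure_range_of_forall_int hH fun l => hN x hx _ (hbN l))
    ((AddSubgroup.closure_le N).2 (Set.range_subset_iff.2 hbN))

theorem existsUnique_apply_eq (hH : H.map (Int.cast : ℤ → ℚ) * toMatrix b B = 1)
    {L : AddSubgroup M} (hL : L = AddSubgroup.closure (Set.range b)) (f : L →+ ℤ) :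
    ∃! x : L, ∀ y : L, B x y = f y := by
  subst hL
  have hbL (k : ι) : b k ∈ AddSubgroup.closure (Set.range b) :=
    AddSubgroup.subset_closure (Set.mem_range_self k)
  set c : ι → ℤ := (fun k => f ⟨b k, hbL k⟩) ᵥ* H
  set x := b.equivFun.symm fun k => (c k : ℚ)
  have hrepr (k : ι) : b.repr x k = c k := by
    rw [← b.equivFun_apply, LinearEquiv.apply_symm_apply]
  have hxL := mem_closure_range_of_repr_int b fun k => ⟨c k, hrepr k⟩
  have hx (l : ι) : B x (b l) = f ⟨b l, hbL l⟩ := by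
    have hc : (fun k => (c k : ℚ)) = (fun k => (f ⟨b k, hbL k⟩ : ℚ)) ᵥ* H.map Int.cast :=
      funext fun k => RingHom.map_vecMul (Int.castRingHom ℚ) H _ k
    rw [apply_basis_eq_vecMul B b, funext hrepr, hc, vecMul_vecMul, hH, vecMul_one]
  refine ⟨⟨x, hxL⟩, fun ⟨y, hy⟩ => ?_, fun ⟨y, hyL⟩ hy => ?_⟩
  · induction hy using AddSubgroup.closure_induction with
    | mem _ h => obtain ⟨l, rfl⟩ := h; exact hx l
    | zero => show B x 0 = f 0; simp
    | add y z hy hz h₁ h₂ =>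
      show B x (y + z) = f (⟨y, hy⟩ + ⟨z, hz⟩)
      rw [map_add, map_add, h₁, h₂, Int.cast_add]
    | neg y hy h =>
      show B x (-y) = f (-⟨y, hy⟩)
      rw [map_neg, map_neg, h, Int.cast_neg]
  · have hrepr0 : b.repr (y - x) = 0 := by
      have h := repr_eq_of_apply_basis hH (x := y - x) (w := 0) fun l => by
        rw [sub_left, hy ⟨b l, hbL l⟩, hx l, sub_self, Pi.zero_apply]
      exact DFunLike.coe_injective (h.trans (zero_vecMul _))
    exact Subtype.ext (sub_eq_zero.1 (b.repr.map_eq_zero_iff.1 hrepr0))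

end Basis

end LinearMap.BilinForm

theorem Matrix.dotProduct_mulVec_mulVec_of_transpose_mul_self {n : Type*} [Fintype n] [DecidableEq n]
    {A : Matrix n n ℚ} (hA : Aᵀ * A = 1) (u v : n → ℚ) : (A *ᵥ u) ⬝ᵥ (A *ᵥ v) = u ⬝ᵥ v := by
  rw [← vecMul_transpose, ← dotProduct_mulVec, mulVec_mulVec, hA, one_mulVec]

theorem Matrix.eq_zero_of_mulVec_eq_self {n : Type*} [Fintype n] [DecidableEq n] {A : Matrix n n ℚ}
    (hA : A * A + A + 1 = 0) {u : n → ℚ} (hu : A *ᵥ u = u) : u = 0 := by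
  have h := congrArg (· *ᵥ u) hA
  simp only [add_mulVec, ← mulVec_mulVec, hu, one_mulVec, zero_mulVec] at h
  funext i
  have hi := congrFun h i
  simp only [Pi.add_apply, Pi.zero_apply] at hi ⊢
  linarith

theorem Rat.exists_int_eq_iff_den_eq_one (q : ℚ) : (∃ n : ℤ, q = n) ↔ q.den = 1 := by
  rw [Rat.den_eq_one_iff]
  exact ⟨fun ⟨n, hn⟩ => by simp [hn], fun h => ⟨q.num, h.symm⟩⟩

theorem exists_int_sum {ι : Type*} (s : Finset ι) {f : ι → ℚ} (h : ∀ i ∈ s, ∃ n : ℤ, f i = n) :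
    ∃ n : ℤ, ∑ i ∈ s, f i = n := by
  choose! n hn using h
  exact ⟨∑ i ∈ s, n i, by push_cast; exact Finset.sum_congr rfl hn⟩

def dotForm : LinearMap.BilinForm ℚ (Fin 6 → Fin 4 → ℚ) :=
  LinearMap.mk₂ ℚ dotQ (fun _ _ _ => by simp [dotQ, add_mul, Finset.sum_add_distrib])
    (fun _ _ _ => by simp [dotQ, Finset.mul_sum, mul_assoc])
    (fun _ _ _ => by simp [dotQ, mul_add, Finset.sum_add_distrib])
    (fun _ _ _ => by simp [dotQ, Finset.mul_sum, mul_left_comm])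

theorem dotForm_apply (x y : Fin 6 → Fin 4 → ℚ) : dotForm x y = dotQ x y := rfl

theorem dotForm_isSymm : dotForm.IsSymm :=
  ⟨fun x y => by simp only [dotForm_apply, dotQ, mul_comm]⟩

theorem dotQ_eq_sum_dotProduct (x y : Fin 6 → Fin 4 → ℚ) : dotQ x y = ∑ i, x i ⬝ᵥ y i := rfl

theorem dotQ_self_pos {x : Fin 6 → Fin 4 → ℚ} (hx : x ≠ 0) : 0 < dotQ x x := by
  obtain ⟨i, hi⟩ := Function.ne_iff.1 hx
  rw [dotQ_eq_sum_dotProduct]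
  refine Finset.sum_pos' (fun j _ => Finset.sum_nonneg fun _ _ => mul_self_nonneg _)
    ⟨i, Finset.mem_univ i, ?_⟩
  exact lt_of_le_of_ne (Finset.sum_nonneg fun _ _ => mul_self_nonneg _)
    (Ne.symm (dotProduct_self_eq_zero.not.2 hi))

local notation "φ₄" => ((1/2 : ℚ) • phiMQ)

theorem mem_D4Q_iff (x : Fin 4 → ℚ) :
    x ∈ D4Q ↔ (∀ j, (x j).den = 1) ∧ (∑ j, x j / 2).den = 1 := by
  simp only [← Rat.exists_int_eq_iff_den_eq_one, ← Finset.sum_div, div_eq_iff (two_ne_zero' ℚ),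
    mul_comm _ (2 : ℚ)]
  rfl

instance : DecidablePred (· ∈ D4Q) := fun x => decidable_of_iff _ (mem_D4Q_iff x).symm

namespace D4Q

theorem exists_int_coords {u : Fin 4 → ℚ} (hu : u ∈ D4Q) :
    ∃ k : Fin 4 → ℤ, (u = fun j => (k j : ℚ)) ∧ ∃ m, ∑ j, k j = 2 * m := by
  obtain ⟨hint, m, hm⟩ := hu
  choose k hk using hint
  refine ⟨k, funext hk, m, ?_⟩
  simp only [hk] at hm
  exact_mod_cast hm

theorem exists_int_dotProduct {u w : Fin 4 → ℚ} (hu : u ∈ D4Q)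
    (hw : w ∈ D4Q ∨ w ∈ Set.range glue) : ∃ n : ℤ, u ⬝ᵥ w = n := by
  obtain ⟨k, rfl, m, hm⟩ := exists_int_coords hu
  have hmq : (k 0 : ℚ) + k 1 + k 2 + k 3 = 2 * m := by
    rw [← Fin.sum_univ_four (fun j => (k j : ℚ))]
    exact_mod_cast hm
  rcases hw with hw | ⟨t, rfl⟩
  · obtain ⟨k', rfl, -⟩ := exists_int_coords hw
    exact ⟨∑ j, k j * k' j, by simp [dotProduct]⟩
  · fin_cases t
    · exact ⟨0, by simp [glue, dotProduct, Fin.sum_univ_four]⟩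
    · exact ⟨m, by simp only [dotProduct, glue, Fin.sum_univ_four, Fin.mk_one, cons_val]; linarith⟩
    · exact ⟨k 3, by simp [glue, dotProduct, Fin.sum_univ_four]⟩
    · exact ⟨m - k 3, by
        simp only [dotProduct, glue, Fin.sum_univ_four, Fin.reduceFinMk, cons_val, Int.cast_sub]
        linarith⟩

theorem exists_half_dotProduct_self {u : Fin 4 → ℚ} (hu : u ∈ D4Q) :
    ∃ m : ℤ, u ⬝ᵥ u / 2 = m := by
  obtain ⟨k, rfl, m, hm⟩ := exists_int_coords hu
  obtain ⟨r, hr⟩ : Even (∑ j, k j * (k j - 1)) :=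
    Finset.sum_induction _ Even (fun _ _ => Even.add) Even.zero fun j _ => Int.even_mul_pred_self _
  have h : ∑ j, k j * k j = 2 * (r + m) := by
    have hsplit : ∑ j, k j * k j = ∑ j, k j * (k j - 1) + ∑ j, k j := by
      rw [← Finset.sum_add_distrib]
      exact Finset.sum_congr rfl fun j _ => by ring
    rw [hsplit, hr, hm]
    ring
  refine ⟨r + m, ?_⟩
  rw [div_eq_iff two_ne_zero, mul_comm, dotProduct]
  exact_mod_cast h

theorem phi4_mulVec_mem {u : Fin 4 → ℚ} (hu : u ∈ D4Q) : φ₄ *ᵥ u ∈ D4Q := by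
  obtain ⟨k, rfl, m, hm⟩ := exists_int_coords hu
  have hmq : (k 0 : ℚ) + k 1 + k 2 + k 3 = 2 * m := by
    rw [← Fin.sum_univ_four (fun j => (k j : ℚ))]
    exact_mod_cast hm
  have hφ : φ₄ *ᵥ (fun j => (k j : ℚ)) =
      fun j => ((![-m, m - k 1 - k 2, m - k 2 - k 3, m - k 1 - k 3] j : ℤ) : ℚ) := by
    funext j
    fin_cases j <;>
      simp only [phiMQ, mulVec, dotProduct, Fin.sum_univ_four, Matrix.smul_apply, of_apply,
        smul_eq_mul, Fin.reduceFinMk, Fin.zero_eta, Fin.mk_one, cons_val, Int.cast_sub,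
        Int.cast_neg] <;>
      linarith
  rw [hφ]
  refine ⟨fun j => ⟨_, rfl⟩, m - k 1 - k 2 - k 3, ?_⟩
  simp only [Fin.sum_univ_four, cons_val, Int.cast_sub, Int.cast_neg]
  ring

end D4Q

theorem glueVecs_mem_range_glue : ∀ a i, glueVecs a i ∈ Set.range glue := by
  simp only [Set.mem_range]
  decide +kernel

theorem glueVecs_dotQ_den : ∀ a b, (dotQ (glueVecs a) (glueVecs b)).den = 1 := by
  decide +kernel

theorem glueVecs_half_dotQ_self_den : ∀ a, (dotQ (glueVecs a) (glueVecs a) / 2).den = 1 := by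
  decide +kernel

theorem exists_int_dotQ_of_mem_generators {x y : Fin 6 → Fin 4 → ℚ}
    (hx : x ∈ {x | ∀ i, x i ∈ D4Q} ∪ Set.range glueVecs)
    (hy : y ∈ {x | ∀ i, x i ∈ D4Q} ∪ Set.range glueVecs) : ∃ n : ℤ, dotQ x y = n := by
  have hblocks : ∀ {x : Fin 6 → Fin 4 → ℚ}, x ∈ {x | ∀ i, x i ∈ D4Q} ∪ Set.range glueVecs →
      ∀ i, x i ∈ D4Q ∨ x i ∈ Set.range glue := by
    rintro x (hx | ⟨a, rfl⟩) i
    exacts [Or.inl (hx i), Or.inr (glueVecs_mem_range_glue a i)]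
  rcases hx with hx | ⟨a, rfl⟩
  · exact exists_int_sum _ fun i _ => D4Q.exists_int_dotProduct (hx i) (hblocks hy i)
  rcases hy with hy | ⟨b, rfl⟩
  · obtain ⟨n, hn⟩ := exists_int_sum Finset.univ fun i _ =>
      D4Q.exists_int_dotProduct (hy i) (hblocks (Or.inr ⟨a, rfl⟩) i)
    exact ⟨n, by rw [← hn, dotQ_eq_sum_dotProduct]; simp only [dotProduct_comm]⟩
  · exact (Rat.exists_int_eq_iff_den_eq_one _).2 (glueVecs_dotQ_den a b)

theorem exists_even_dotQ_self_of_mem_generators {x : Fin 6 → Fin 4 → ℚ}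
    (hx : x ∈ {x | ∀ i, x i ∈ D4Q} ∪ Set.range glueVecs) : ∃ m : ℤ, dotQ x x = 2 * m := by
  suffices h : ∃ m : ℤ, dotQ x x / 2 = m by
    obtain ⟨m, hm⟩ := h
    exact ⟨m, by rw [← hm]; ring⟩
  rcases hx with hx | ⟨a, rfl⟩
  · rw [dotQ_eq_sum_dotProduct, Finset.sum_div]
    exact exists_int_sum _ fun i _ => D4Q.exists_half_dotProduct_self (hx i)
  · exact (Rat.exists_int_eq_iff_den_eq_one _).2 (glueVecs_half_dotQ_self_den a)

theorem exists_int_dotQ_of_mem_NLat {x y : Fin 6 → Fin 4 → ℚ} (hx : x ∈ NLat) (hy : y ∈ NLat) :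
    ∃ n : ℤ, dotQ x y = n :=
  dotForm.exists_int_of_mem_closure (fun _ hs _ ht => exists_int_dotQ_of_mem_generators hs ht)
    hx hy

theorem exists_even_dotQ_self_of_mem_NLat {x : Fin 6 → Fin 4 → ℚ} (hx : x ∈ NLat) :
    ∃ m : ℤ, dotQ x x = 2 * m :=
  dotForm.exists_even_of_mem_closure dotForm_isSymm
    (fun _ hs _ ht => exists_int_dotQ_of_mem_generators hs ht)
    (fun _ hs => exists_even_dotQ_self_of_mem_generators hs) hx

theorem mem_NLat_of_forall_sub_mem_D4Q {x : Fin 6 → Fin 4 → ℚ} (w : Fin 7 → ℤ)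
    (h : ∀ i, (x - ∑ a, w a • glueVecs a) i ∈ D4Q) : x ∈ NLat := by
  rw [← sub_add_cancel x (∑ a, w a • glueVecs a)]
  refine add_mem (AddSubgroup.subset_closure (Or.inl h)) (sum_mem fun a _ => zsmul_mem ?_ _)
  exact AddSubgroup.subset_closure (Or.inr ⟨a, rfl⟩)

def phi6GlueCoeff : Fin 7 → Fin 7 → ℤ :=
  ![![0,1,0,0,0,0,0], ![1,1,0,0,0,0,0], ![0,0,1,0,1,1,0], ![0,0,1,0,1,0,0], ![0,0,0,1,0,1,0], ![0,0,1,1,0,1,0], ![0,0,1,0,0,1,0]]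

theorem phi6_glueVecs_sub_glue_mem_D4Q :
    ∀ a i, (phi6 (glueVecs a) - ∑ b, phi6GlueCoeff a b • glueVecs b) i ∈ D4Q := by
  decide +kernel

def phi6Hom : (Fin 6 → Fin 4 → ℚ) →+ (Fin 6 → Fin 4 → ℚ) :=
  AddMonoidHom.mk' phi6 fun x y => funext fun i => mulVec_add _ (x i) (y i)

theorem phi6_mem_NLat {x : Fin 6 → Fin 4 → ℚ} (hx : x ∈ NLat) : phi6 x ∈ NLat := by
  suffices h : NLat ≤ NLat.comap phi6Hom from h hx
  refine (AddSubgroup.closure_le _).2 ?_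
  rintro g (hg | ⟨a, rfl⟩)
  · exact AddSubgroup.subset_closure (Or.inl fun i => D4Q.phi4_mulVec_mem (hg i))
  · exact mem_NLat_of_forall_sub_mem_D4Q (phi6GlueCoeff a) (phi6_glueVecs_sub_glue_mem_D4Q a)

theorem phi4_mul_phi4_mul_phi4 : φ₄ * φ₄ * φ₄ = 1 := by
  decide +kernel

theorem phi4_mul_phi4_add_phi4_add_one : φ₄ * φ₄ + φ₄ + 1 = 0 := by
  decide +kernel

theorem phi4_transpose_mul_self : φ₄ᵀ * φ₄ = 1 := by
  decide +kernel

theorem phi6_comp_phi6_comp_phi6 : phi6 ∘ phi6 ∘ phi6 = id := by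
  funext x i
  simp only [Function.comp_apply, phi6, mulVec_mulVec, ← mul_assoc, phi4_mul_phi4_mul_phi4,
    one_mulVec, id]

theorem image_phi6_NLat : phi6 '' (NLat : Set (Fin 6 → Fin 4 → ℚ)) = NLat := by
  refine (Set.image_subset_iff.2 fun x hx => phi6_mem_NLat hx).antisymm fun x hx => ?_
  exact ⟨phi6 (phi6 x), phi6_mem_NLat (phi6_mem_NLat hx), congrFun phi6_comp_phi6_comp_phi6 x⟩

theorem dotQ_phi6 (x y : Fin 6 → Fin 4 → ℚ) : dotQ (phi6 x) (phi6 y) = dotQ x y := by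
  simp only [dotQ_eq_sum_dotProduct, phi6,
    dotProduct_mulVec_mulVec_of_transpose_mul_self phi4_transpose_mul_self]

theorem eq_zero_of_phi6_eq_self {x : Fin 6 → Fin 4 → ℚ} (hx : phi6 x = x) : x = 0 :=
  funext fun i => eq_zero_of_mulVec_eq_self phi4_mul_phi4_add_phi4_add_one (congrFun hx i)

theorem phi6_ne_id : phi6 ≠ id := fun h =>
  one_ne_zero (congrFun (congrFun (eq_zero_of_phi6_eq_self (congrFun h fun _ _ => 1)) 0) 0)

/-- Twice the vectors of a `ℤ`-basis of `N`, found by computer; `basisVecGram` is the Gram matrix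
of that basis and `basisVecGramInv` its inverse. -/
def twiceBasisVec : Fin 24 → Fin 6 → Fin 4 → ℤ :=
  ![![![1,1,1,1],![0,0,0,0],![0,0,0,0],![0,0,0,2],![1,1,1,1],![0,0,0,2]], ![![0,2,0,0],![0,0,0,0],![0,0,0,0],![1,1,1,3],![0,0,0,2],![1,1,1,3]], ![![0,0,2,0],![0,0,0,0],![0,0,0,0],![1,1,1,3],![0,0,0,2],![1,1,1,3]], ![![0,0,0,2],![0,0,0,0],![0,0,0,0],![1,1,1,3],![0,0,0,2],![1,1,1,3]], ![![0,0,0,0],![1,1,1,1],![0,0,0,0],![1,1,1,1],![0,0,0,2],![0,0,0,2]], ![![0,0,0,0],![0,2,0,0],![0,0,0,0],![0,0,0,2],![1,1,1,3],![1,1,1,3]], ![![0,0,0,0],![0,0,2,0],![0,0,0,0],![0,0,0,2],![1,1,1,3],![1,1,1,3]], ![![0,0,0,0],![0,0,0,2],![0,0,0,0],![0,0,0,2],![1,1,1,3],![1,1,1,3]], ![![0,0,0,0],![0,0,0,0],![1,1,1,1],![0,0,0,2],![0,0,0,2],![1,1,1,1]], ![![0,0,0,0],![0,0,0,0],![0,2,0,0],![1,1,1,3],![1,1,1,3],![0,0,0,2]],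 ![![0,0,0,0],![0,0,0,0],![0,0,2,0],![1,1,1,3],![1,1,1,3],![0,0,0,2]], ![![0,0,0,0],![0,0,0,0],![0,0,0,2],![1,1,1,3],![1,1,1,3],![0,0,0,2]], ![![0,0,0,0],![0,0,0,0],![0,0,0,0],![2,0,0,2],![0,0,0,0],![0,0,0,0]], ![![0,0,0,0],![0,0,0,0],![0,0,0,0],![0,2,0,2],![0,0,0,0],![0,0,0,0]], ![![0,0,0,0],![0,0,0,0],![0,0,0,0],![0,0,2,2],![0,0,0,0],![0,0,0,0]], ![![0,0,0,0],![0,0,0,0],![0,0,0,0],![0,0,0,4],![0,0,0,0],![0,0,0,0]], ![![0,0,0,0],![0,0,0,0],![0,0,0,0],![0,0,0,0],![2,0,0,2],![0,0,0,0]], ![![0,0,0,0],![0,0,0,0],![0,0,0,0],![0,0,0,0],![0,2,0,2],![0,0,0,0]], ![![0,0,0,0],![0,0,0,0],![0,0,0,0],![0,0,0,0],![0,0,2,2],![0,0,0,0]], ![![0,0,0,0],![0,0,0,0],![0,0,0,0],![0,0,0,0],![0,0,0,4],![0,0,0,0]], ![![0,0,0,0],![0,0,0,0],![0,0,0,0],![0,0,0,0],![0,0,0,0],![2,0,0,2]],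 ![![0,0,0,0],![0,0,0,0],![0,0,0,0],![0,0,0,0],![0,0,0,0],![0,2,0,2]], ![![0,0,0,0],![0,0,0,0],![0,0,0,0],![0,0,0,0],![0,0,0,0],![0,0,2,2]], ![![0,0,0,0],![0,0,0,0],![0,0,0,0],![0,0,0,0],![0,0,0,0],![0,0,0,4]]]

def basisVec (k : Fin 24) : Fin 6 → Fin 4 → ℚ := fun i j => (twiceBasisVec k i j : ℚ) / 2

def basisVecGram : Matrix (Fin 24) (Fin 24) ℤ :=
  ![![4,4,4,4,2,4,4,4,2,4,4,4,1,1,1,2,1,1,1,1,1,1,1,2], ![4,8,7,7,4,6,6,6,4,6,6,6,2,2,2,3,1,1,1,2,2,2,2,3], ![4,7,8,7,4,6,6,6,4,6,6,6,2,2,2,3,1,1,1,2,2,2,2,3], ![4,7,7,8,4,6,6,6,4,6,6,6,2,2,2,3,1,1,1,2,2,2,2,3], ![2,4,4,4,4,4,4,4,2,4,4,4,1,1,1,1,1,1,1,2,1,1,1,2], ![4,6,6,6,4,8,7,7,4,6,6,6,1,1,1,2,2,2,2,3,2,2,2,3], ![4,6,6,6,4,7,8,7,4,6,6,6,1,1,1,2,2,2,2,3,2,2,2,3],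 ![4,6,6,6,4,7,7,8,4,6,6,6,1,1,1,2,2,2,2,3,2,2,2,3], ![2,4,4,4,2,4,4,4,4,4,4,4,1,1,1,2,1,1,1,2,1,1,1,1], ![4,6,6,6,4,6,6,6,4,8,7,7,2,2,2,3,2,2,2,3,1,1,1,2], ![4,6,6,6,4,6,6,6,4,7,8,7,2,2,2,3,2,2,2,3,1,1,1,2], ![4,6,6,6,4,6,6,6,4,7,7,8,2,2,2,3,2,2,2,3,1,1,1,2], ![1,2,2,2,1,1,1,1,1,2,2,2,2,1,1,2,0,0,0,0,0,0,0,0], ![1,2,2,2,1,1,1,1,1,2,2,2,1,2,1,2,0,0,0,0,0,0,0,0], ![1,2,2,2,1,1,1,1,1,2,2,2,1,1,2,2,0,0,0,0,0,0,0,0], ![2,3,3,3,1,2,2,2,2,3,3,3,2,2,2,4,0,0,0,0,0,0,0,0], ![1,1,1,1,1,2,2,2,1,2,2,2,0,0,0,0,2,1,1,2,0,0,0,0], ![1,1,1,1,1,2,2,2,1,2,2,2,0,0,0,0,1,2,1,2,0,0,0,0], ![1,1,1,1,1,2,2,2,1,2,2,2,0,0,0,0,1,1,2,2,0,0,0,0],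 ![1,2,2,2,2,3,3,3,2,3,3,3,0,0,0,0,2,2,2,4,0,0,0,0], ![1,2,2,2,1,2,2,2,1,1,1,1,0,0,0,0,0,0,0,0,2,1,1,2], ![1,2,2,2,1,2,2,2,1,1,1,1,0,0,0,0,0,0,0,0,1,2,1,2], ![1,2,2,2,1,2,2,2,1,1,1,1,0,0,0,0,0,0,0,0,1,1,2,2], ![2,3,3,3,2,3,3,3,1,2,2,2,0,0,0,0,0,0,0,0,2,2,2,4]]

def basisVecGramInv : Matrix (Fin 24) (Fin 24) ℤ :=
  ![![4,-2,-2,-2,0,0,0,0,0,0,0,0,3,3,3,-2,-2,-2,-2,5,3,3,3,-2], ![-2,2,1,1,0,0,0,0,0,0,0,0,-2,-2,-2,1,1,1,1,-3,-2,-2,-2,1], ![-2,1,2,1,0,0,0,0,0,0,0,0,-2,-2,-2,1,1,1,1,-3,-2,-2,-2,1], ![-2,1,1,2,0,0,0,0,0,0,0,0,-2,-2,-2,1,1,1,1,-3,-2,-2,-2,1], ![0,0,0,0,4,-2,-2,-2,0,0,0,0,-2,-2,-2,5,3,3,3,-2,3,3,3,-2], ![0,0,0,0,-2,2,1,1,0,0,0,0,1,1,1,-3,-2,-2,-2,1,-2,-2,-2,1],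 ![0,0,0,0,-2,1,2,1,0,0,0,0,1,1,1,-3,-2,-2,-2,1,-2,-2,-2,1], ![0,0,0,0,-2,1,1,2,0,0,0,0,1,1,1,-3,-2,-2,-2,1,-2,-2,-2,1], ![0,0,0,0,0,0,0,0,4,-2,-2,-2,3,3,3,-2,3,3,3,-2,-2,-2,-2,5], ![0,0,0,0,0,0,0,0,-2,2,1,1,-2,-2,-2,1,-2,-2,-2,1,1,1,1,-3], ![0,0,0,0,0,0,0,0,-2,1,2,1,-2,-2,-2,1,-2,-2,-2,1,1,1,1,-3], ![0,0,0,0,0,0,0,0,-2,1,1,2,-2,-2,-2,1,-2,-2,-2,1,1,1,1,-3], ![3,-2,-2,-2,-2,1,1,1,3,-2,-2,-2,8,7,7,-6,0,0,0,4,0,0,0,4], ![3,-2,-2,-2,-2,1,1,1,3,-2,-2,-2,7,8,7,-6,0,0,0,4,0,0,0,4], ![3,-2,-2,-2,-2,1,1,1,3,-2,-2,-2,7,7,8,-6,0,0,0,4,0,0,0,4], ![-2,1,1,1,5,-3,-3,-3,-2,1,1,1,-6,-6,-6,10,4,4,4,-4,4,4,4,-4], ![-2,1,1,1,3,-2,-2,-2,3,-2,-2,-2,0,0,0,4,8,7,7,-6,0,0,0,4],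 ![-2,1,1,1,3,-2,-2,-2,3,-2,-2,-2,0,0,0,4,7,8,7,-6,0,0,0,4], ![-2,1,1,1,3,-2,-2,-2,3,-2,-2,-2,0,0,0,4,7,7,8,-6,0,0,0,4], ![5,-3,-3,-3,-2,1,1,1,-2,1,1,1,4,4,4,-4,-6,-6,-6,10,4,4,4,-4], ![3,-2,-2,-2,3,-2,-2,-2,-2,1,1,1,0,0,0,4,0,0,0,4,8,7,7,-6], ![3,-2,-2,-2,3,-2,-2,-2,-2,1,1,1,0,0,0,4,0,0,0,4,7,8,7,-6], ![3,-2,-2,-2,3,-2,-2,-2,-2,1,1,1,0,0,0,4,0,0,0,4,7,7,8,-6], ![-2,1,1,1,-2,1,1,1,5,-3,-3,-3,4,4,4,-4,4,4,4,-4,-6,-6,-6,10]]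

def basisVecGlueCoeff : Fin 24 → Fin 7 → ℤ :=
  ![![1,0,0,1,0,1,0], ![0,1,0,1,1,1,0], ![0,1,0,1,1,1,0], ![0,1,0,1,1,1,0], ![0,0,0,1,1,0,0], ![0,0,1,1,1,1,0], ![0,0,1,1,1,1,0], ![0,0,1,1,1,1,0], ![0,0,0,0,1,1,0], ![0,0,1,0,0,0,0], ![0,0,1,0,0,0,0], ![0,0,1,0,0,0,0], ![0,0,0,0,0,0,0], ![0,0,0,0,0,0,0], ![0,0,0,0,0,0,0], ![0,0,0,0,0,0,0], ![0,0,0,0,0,0,0], ![0,0,0,0,0,0,0], ![0,0,0,0,0,0,0], ![0,0,0,0,0,0,0], ![0,0,0,0,0,0,0], ![0,0,0,0,0,0,0], ![0,0,0,0,0,0,0], ![0,0,0,0,0,0,0]]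

theorem basisVec_sub_glue_mem_D4Q :
    ∀ k i, (basisVec k - ∑ a, basisVecGlueCoeff k a • glueVecs a) i ∈ D4Q := by
  decide +kernel

theorem dotQ_basisVec : ∀ k l, dotQ (basisVec k) (basisVec l) = basisVecGram k l := by
  decide +kernel

theorem basisVecGramInv_mul_basisVecGram : basisVecGramInv * basisVecGram = 1 := by
  decide +kernel

theorem basisVecGramInv_mul_gram_basisVec :
    basisVecGramInv.map (Int.cast : ℤ → ℚ) *
      Matrix.of (fun k l => dotForm (basisVec k) (basisVec l)) = 1 := by
  have hgram : Matrix.of (fun k l => dotForm (basisVec k) (basisVec l))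
      = basisVecGram.map (Int.cast : ℤ → ℚ) := Matrix.ext dotQ_basisVec
  have h := congrArg (Matrix.map · (Int.castRingHom ℚ)) basisVecGramInv_mul_basisVecGram
  rw [Matrix.map_mul, Matrix.map_one _ (map_zero _) (map_one _)] at h
  rwa [hgram]

noncomputable def basisVecRat : Basis (Fin 24) ℚ (Fin 6 → Fin 4 → ℚ) :=
  basisOfLinearIndependentOfCardEqFinrank
    (dotForm.linearIndependent_of_mul_gram_eq_one basisVec basisVecGramInv_mul_gram_basisVec)
    (by simp [Module.finrank_pi_fintype])

theorem coe_basisVecRat : ⇑basisVecRat = basisVec :=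
  coe_basisOfLinearIndependentOfCardEqFinrank _ _

theorem basisVecGramInv_mul_toMatrix_basisVecRat :
    basisVecGramInv.map (Int.cast : ℤ → ℚ) * LinearMap.BilinForm.toMatrix basisVecRat dotForm
      = 1 := by
  convert basisVecGramInv_mul_gram_basisVec
  ext k l
  simp [coe_basisVecRat]

theorem NLat_eq_closure_range_basisVecRat :
    NLat = AddSubgroup.closure (Set.range basisVecRat) := by
  refine dotForm.eq_closure_range_of_integral basisVecGramInv_mul_toMatrix_basisVecRat
    (fun k => ?_) fun _ hx _ hy => exists_int_dotQ_of_mem_NLat hx hy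
  rw [coe_basisVecRat]
  exact mem_NLat_of_forall_sub_mem_D4Q (basisVecGlueCoeff k) (basisVec_sub_glue_mem_D4Q k)

noncomputable def NLatBasis : Basis (Fin 24) ℤ NLat.toIntSubmodule :=
  basisVecRat.addSubgroupOfClosure NLat NLat_eq_closure_range_basisVecRat

/-- `N = Ni(D₄⁶)` is an even unimodular positive-definite lattice of rank 24; the map
`φ⁽⁶⁾` preserves `N`, is an isometry of order 3, and has no nonzero fixed point in `N`
(it is the automorphism `σ₂ = φ⁽⁶⁾` of `Ni(D₄⁶)`,
with `rank Ni(D₄⁶)^{σ₂} = 0`). -/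
theorem stmt19 :
    (Module.Free ℤ ↥NLat ∧ Module.Finite ℤ ↥NLat ∧ Module.finrank ℤ ↥NLat = 24) ∧
    (∀ x ∈ NLat, ∀ y ∈ NLat, ∃ n : ℤ, dotQ x y = n) ∧
    (∀ x ∈ NLat, ∃ m : ℤ, dotQ x x = 2 * m) ∧
    (∀ x ∈ NLat, x ≠ 0 → 0 < dotQ x x) ∧
    (∀ f : ↥NLat →+ ℤ, ∃! x : ↥NLat, ∀ y : ↥NLat, dotQ x.val y.val = (f y : ℚ)) ∧
    phi6 '' (NLat : Set (Fin 6 → Fin 4 → ℚ)) = (NLat : Set (Fin 6 → Fin 4 → ℚ)) ∧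
    (∀ x y, dotQ (phi6 x) (phi6 y) = dotQ x y) ∧
    (phi6 ∘ phi6 ∘ phi6 = id ∧ phi6 ≠ id) ∧
    {x : Fin 6 → Fin 4 → ℚ | x ∈ NLat ∧ phi6 x = x} = {0} := by
  refine ⟨⟨.of_basis NLatBasis, .of_basis NLatBasis,
      (finrank_eq_card_basis NLatBasis).trans (Fintype.card_fin 24)⟩,
    fun x hx y hy => exists_int_dotQ_of_mem_NLat hx hy,
    fun x hx => exists_even_dotQ_self_of_mem_NLat hx,
    fun x _ hx => dotQ_self_pos hx,
    dotForm.existsUnique_apply_eq basisVecGramInv_mul_toMatrix_basisVecRat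
      NLat_eq_closure_range_basisVecRat,
    image_phi6_NLat, dotQ_phi6, ⟨phi6_comp_phi6_comp_phi6, phi6_ne_id⟩, ?_⟩
  ext x
  exact ⟨fun ⟨_, hx⟩ => eq_zero_of_phi6_eq_self hx,
    fun hx => (Set.mem_singleton_iff.1 hx).symm ▸ ⟨zero_mem _, map_zero phi6Hom⟩⟩
end
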